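/- Let A be a finite ring, f ∈ R = A[X; θ, δ] monic of degree n with f = h·g = g·ħ, deg(g) = n−k, deg(ħ) = k, and the leading coefficient of ħ invertible in A. Define the n × n matrix M over A whose i-th row (i = 1, …, n) is the coefficient vector of the remainder of X^{i−1}·ħ under right division by f. Then the vector representation C ⊆ Aⁿ of the code 𝒞 = Rg/Rf equals the left kernel of M: C = { w ∈ Aⁿ : w·M = 0 }. -/

import Mathlib

/-- The skew polynomial ring `R = A[X; θ, δ]`: a ring `R` together with a coefficient
embedding `C : A →+* R` and an indeterminate `X` satisfying the commutation rule
`X * C a = C (θ a) * X + C (δ a)`, such that every element of `R` is, in a unique way,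
a left polynomial `Σᵢ C aᵢ * X ^ i`. -/
structure SkewPolyRing (A : Type*) [Ring A] (θ : A →+* A) (δ : A →+ A)
    (R : Type*) [Ring R] where
  /-- embedding of the coefficient ring -/
  C : A →+* R
  /-- the indeterminate -/
  X : R
  /-- the commutation rule `X·a = θ(a)·X + δ(a)` -/
  X_mul : ∀ a : A, X * C a = C (θ a) * X + C (δ a)
  /-- every element of `R` is uniquely a left polynomial in `X` -/
  equiv : (ℕ →₀ A) ≃ R
  equiv_apply : ∀ p : ℕ →₀ A, equiv p = p.sum fun i a => C a * X ^ i

namespace SkewPolyRing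

variable {A : Type*} [Ring A] {θ : A →+* A} {δ : A →+ A} {R : Type*} [Ring R]

/-- the `i`-th coefficient of a skew polynomial -/
noncomputable def coeff (S : SkewPolyRing A θ δ R) (f : R) (i : ℕ) : A :=
  S.equiv.symm f i

/-- the degree of a skew polynomial (the degree of `0` is `⊥ = -∞`) -/
noncomputable def deg (S : SkewPolyRing A θ δ R) (f : R) : WithBot ℕ :=
  (S.equiv.symm f).support.max

/-- the degree of a skew polynomial, as a natural number -/
noncomputable def natDeg (S : SkewPolyRing A θ δ R) (f : R) : ℕ :=
  WithBot.unbotD 0 (S.deg f)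

/-- the leading coefficient of a skew polynomial -/
noncomputable def lc (S : SkewPolyRing A θ δ R) (f : R) : A :=
  S.coeff f (S.natDeg f)

end SkewPolyRing

/-!
Write `p` for the polynomial of `w` and `qᵢ` for the quotients in the rows of `M`. Summing the
rows gives `p * ħ = Q * f + r` with `Q = Σ wᵢ qᵢ` and `r` the polynomial of `w M`, of degree `< n`.
If `p = u * g`, then `p * ħ = u * f`, so `(u - Q) * f = r`; as `f` is monic of degree `n`, this
forces `u = Q` and hence `r = 0`. Conversely, if `r = 0` then `(p - Q * g) * ħ = 0`. The top
coefficient of a product `a * b` is `lc a * θ^[deg a] (lc b)`, and `θ` maps units to units, so right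
multiplication by `ħ` is injective and `p = Q * g`.
-/

namespace SkewPolyRing

variable {A : Type*} [Ring A] {θ : A →+* A} {δ : A →+ A} {R : Type*} [Ring R]
  (S : SkewPolyRing A θ δ R)

theorem equiv_zero : S.equiv 0 = 0 := by
  simp [S.equiv_apply]

theorem equiv_add (p q : ℕ →₀ A) : S.equiv (p + q) = S.equiv p + S.equiv q := by
  simp only [S.equiv_apply]
  exact Finsupp.sum_add_index' (by simp) (by simp [add_mul])

theorem equiv_single (i : ℕ) (a : A) : S.equiv (Finsupp.single i a) = S.C a * S.X ^ i := by
  rw [S.equiv_apply, Finsupp.sum_single_index (by simp)]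

noncomputable def addEquiv : (ℕ →₀ A) ≃+ R :=
  { S.equiv with map_add' := S.equiv_add }

noncomputable def coeffHom (i : ℕ) : R →+ A :=
  (Finsupp.applyAddHom i).comp S.addEquiv.symm.toAddMonoidHom

@[simp]
theorem coeffHom_apply (x : R) (i : ℕ) : S.coeffHom i x = S.coeff x i := rfl

@[simp]
theorem coeff_zero (i : ℕ) : S.coeff 0 i = 0 := by
  rw [← coeffHom_apply, map_zero]

@[simp]
theorem coeff_add (x y : R) (i : ℕ) : S.coeff (x + y) i = S.coeff x i + S.coeff y i := by
  simp only [← coeffHom_apply, map_add]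

theorem coeff_sum {ι : Type*} (s : Finset ι) (x : ι → R) (i : ℕ) :
    S.coeff (∑ j ∈ s, x j) i = ∑ j ∈ s, S.coeff (x j) i := by
  simp only [← coeffHom_apply, map_sum]

theorem coeff_C_mul_X_pow (a : A) (i m : ℕ) :
    S.coeff (S.C a * S.X ^ i) m = if i = m then a else 0 := by
  rw [coeff, ← S.equiv_single, Equiv.symm_apply_apply, Finsupp.single_apply]

theorem ext_coeff {x y : R} (h : ∀ m, S.coeff x m = S.coeff y m) : x = y :=
  S.equiv.symm.injective (Finsupp.ext h)

theorem induction_on {motive : R → Prop} (x : R) (zero : motive 0)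
    (add : ∀ x y, motive x → motive y → motive (x + y))
    (monomial : ∀ a i, motive (S.C a * S.X ^ i)) : motive x := by
  obtain ⟨p, rfl⟩ := S.equiv.surjective x
  induction p using Finsupp.induction_linear with
  | zero => rwa [S.equiv_zero]
  | add p q hp hq => rw [S.equiv_add]; exact add _ _ hp hq
  | single i a => rw [S.equiv_single]; exact monomial a i

theorem coeff_C_mul (a : A) (x : R) (m : ℕ) : S.coeff (S.C a * x) m = a * S.coeff x m := by
  induction x using S.induction_on with
  | zero => simp
  | add x y hx hy => simp [mul_add, hx, hy]
  | monomial b i =>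
    rw [← mul_assoc, ← map_mul, coeff_C_mul_X_pow, coeff_C_mul_X_pow]
    split_ifs <;> simp

theorem coeff_X_mul_succ (x : R) (m : ℕ) :
    S.coeff (S.X * x) (m + 1) = θ (S.coeff x m) + δ (S.coeff x (m + 1)) := by
  induction x using S.induction_on with
  | zero => simp
  | add x y hx hy => simp only [mul_add, coeff_add, hx, hy, map_add]; abel
  | monomial a i =>
    rw [← mul_assoc, S.X_mul, add_mul, mul_assoc, ← pow_succ', coeff_add]
    simp only [coeff_C_mul_X_pow, add_left_inj]
    split_ifs <;> simp_all

theorem eq_sum_range_coeff {x : R} {N : ℕ} (hx : ∀ j, N ≤ j → S.coeff x j = 0) :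
    x = ∑ j ∈ Finset.range N, S.C (S.coeff x j) * S.X ^ j := by
  refine S.ext_coeff fun m => ?_
  simp only [coeff_sum, coeff_C_mul_X_pow, Finset.sum_ite_eq', Finset.mem_range]
  split_ifs with hm
  · rfl
  · exact hx m (not_lt.mp hm)

theorem coeff_eq_zero_of_deg_le {x : R} {N : ℕ} (hx : S.deg x ≤ N) {i : ℕ} (hi : N < i) :
    S.coeff x i = 0 := by
  by_contra h
  have := (Finset.le_max (Finsupp.mem_support_iff.mpr h)).trans hx
  exact absurd (WithBot.coe_le_coe.mp this) (not_le.mpr hi)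

theorem exists_top_coeff_ne_zero {x : R} (hx : x ≠ 0) :
    ∃ d, S.coeff x d ≠ 0 ∧ ∀ i, d < i → S.coeff x i = 0 := by
  have hs : (S.equiv.symm x).support.Nonempty :=
    Finsupp.support_nonempty_iff.mpr (S.addEquiv.symm.map_ne_zero_iff.mpr hx)
  refine ⟨_, Finsupp.mem_support_iff.mp (Finset.max'_mem _ hs), fun i hi => ?_⟩
  exact Finsupp.notMem_support_iff.mp fun h => absurd (Finset.le_max' _ i h) (not_le.mpr hi)

theorem coeff_X_pow_mul {z : R} {d : ℕ} (hz : ∀ j, d < j → S.coeff z j = 0) (i : ℕ) :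
    (∀ m, d + i < m → S.coeff (S.X ^ i * z) m = 0) ∧
      S.coeff (S.X ^ i * z) (d + i) = θ^[i] (S.coeff z d) := by
  induction i with
  | zero => simpa using hz
  | succ i ih =>
    rw [pow_succ', mul_assoc]
    refine ⟨fun m hm => ?_, ?_⟩
    · obtain ⟨m, rfl⟩ : ∃ m', m = m' + 1 := ⟨m - 1, by omega⟩
      rw [coeff_X_mul_succ, ih.1 m (by omega), ih.1 (m + 1) (by omega), map_zero, map_zero,
        add_zero]
    · rw [← add_assoc, coeff_X_mul_succ, ih.2, ih.1 _ (by omega), map_zero, add_zero,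
        Function.iterate_succ_apply']

theorem coeff_mul_eq_sum {a : R} {N : ℕ} (ha : ∀ i, N ≤ i → S.coeff a i = 0) (b : R) (m : ℕ) :
    S.coeff (a * b) m = ∑ i ∈ Finset.range N, S.coeff a i * S.coeff (S.X ^ i * b) m := by
  conv_lhs => rw [S.eq_sum_range_coeff ha]
  simp only [Finset.sum_mul, coeff_sum, mul_assoc, coeff_C_mul]

theorem coeff_mul_add {a b : R} {da db : ℕ} (ha : ∀ i, da < i → S.coeff a i = 0)
    (hb : ∀ j, db < j → S.coeff b j = 0) :
    S.coeff (a * b) (da + db) = S.coeff a da * θ^[da] (S.coeff b db) := by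
  rw [S.coeff_mul_eq_sum (N := da + 1) ha b,
    Finset.sum_eq_single_of_mem da (by simp)]
  · rw [add_comm, (S.coeff_X_pow_mul hb da).2]
  · intro i hi hne
    rw [Finset.mem_range] at hi
    rw [(S.coeff_X_pow_mul hb i).1 _ (by omega), mul_zero]

theorem eq_zero_of_coeff_mul_eq_zero {a b : R} {d : ℕ} (hb : ∀ j, d < j → S.coeff b j = 0)
    (hu : IsUnit (S.coeff b d)) (hab : ∀ m, d ≤ m → S.coeff (a * b) m = 0) : a = 0 := by
  by_contra ha
  obtain ⟨e, hae, he⟩ := S.exists_top_coeff_ne_zero ha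
  have htop := S.coeff_mul_add he hb
  rw [hab _ (by omega), eq_comm, ← RingHom.coe_pow, (hu.map (θ ^ e)).mul_left_eq_zero] at htop
  exact hae htop

noncomputable def ofVec {n : ℕ} (v : Fin n → A) : R :=
  ∑ i : Fin n, S.C (v i) * S.X ^ (i : ℕ)

theorem coeff_ofVec {n : ℕ} (v : Fin n → A) (m : ℕ) :
    S.coeff (S.ofVec v) m = if h : m < n then v ⟨m, h⟩ else 0 := by
  simp only [ofVec, coeff_sum, coeff_C_mul_X_pow]
  split_ifs with h
  · rw [Finset.sum_eq_single ⟨m, h⟩ (fun i _ hi => if_neg fun he => hi (Fin.ext he)) (by simp),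
      if_pos rfl]
  · exact Finset.sum_eq_zero fun i _ => if_neg fun he : (i : ℕ) = m => h (he ▸ i.isLt)

theorem ofVec_eq_zero_iff {n : ℕ} (v : Fin n → A) : S.ofVec v = 0 ↔ v = 0 := by
  refine ⟨fun hv => funext fun j => ?_, fun hv => by simp [ofVec, hv]⟩
  simpa [hv] using (S.coeff_ofVec v j).symm

theorem ofVec_mul_eq {n : ℕ} {M : Matrix (Fin n) (Fin n) A} {b f : R} {q : Fin n → R}
    (hq : ∀ i : Fin n, S.X ^ (i : ℕ) * b = q i * f + S.ofVec (M i)) (w : Fin n → A) :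
    S.ofVec w * b = (∑ i, S.C (w i) * q i) * f + S.ofVec (Matrix.vecMul w M) := by
  simp only [ofVec, Finset.sum_mul, mul_assoc, hq, mul_add, Finset.sum_add_distrib,
    Finset.mul_sum, Matrix.vecMul, dotProduct, map_sum]
  simp only [← mul_assoc, ← map_mul]
  exact congrArg _ Finset.sum_comm

end SkewPolyRing

theorem code_eq_leftKernel_general
    {A R : Type*} [Ring A] [Ring R]
    (θ : A →+* A) (δ : A →+ A)
    (S : SkewPolyRing A θ δ R)
    (f g hbar : R) (n k : ℕ)
    (hdegf : S.deg f = (n : WithBot ℕ)) (hmf : S.coeff f n = 1)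
    (h2 : f = g * hbar)
    (hdeghbar : S.deg hbar = (k : WithBot ℕ))
    (hlc : IsUnit (S.coeff hbar k))
    (M : Matrix (Fin n) (Fin n) A)
    (hM : ∀ i : Fin n, ∃ q : R,
      S.X ^ (i : ℕ) * hbar = q * f + ∑ j : Fin n, S.C (M i j) * S.X ^ (j : ℕ)) :
    ∀ w : Fin n → A,
      (∃ u : R, (∑ i : Fin n, S.C (w i) * S.X ^ (i : ℕ)) = u * g) ↔
        Matrix.vecMul w M = 0 := by
  intro w
  choose q hq using hM
  change (∃ u, S.ofVec w = u * g) ↔ _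
  set Q := ∑ i, S.C (w i) * q i
  have key : S.ofVec w * hbar = Q * f + S.ofVec (Matrix.vecMul w M) := S.ofVec_mul_eq hq w
  have hf : ∀ j, n < j → S.coeff f j = 0 := fun _ => S.coeff_eq_zero_of_deg_le hdegf.le
  have hhbar : ∀ j, k < j → S.coeff hbar j = 0 := fun _ => S.coeff_eq_zero_of_deg_le hdeghbar.le
  constructor
  · rintro ⟨u, hu⟩
    have hrem : (u - Q) * f = S.ofVec (Matrix.vecMul w M) := by
      rw [sub_mul, h2, ← mul_assoc, ← hu, key, h2, add_sub_cancel_left]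
    have huQ : u - Q = 0 := S.eq_zero_of_coeff_mul_eq_zero hf (hmf ▸ isUnit_one) fun m hm => by
      rw [hrem, S.coeff_ofVec, dif_neg (not_lt.mpr hm)]
    rw [← S.ofVec_eq_zero_iff, ← hrem, huQ, zero_mul]
  · intro hw
    have hcancel : (S.ofVec w - Q * g) * hbar = 0 := by
      rw [sub_mul, key, (S.ofVec_eq_zero_iff _).mpr hw, add_zero, mul_assoc, ← h2, sub_self]
    refine ⟨Q, sub_eq_zero.mp (S.eq_zero_of_coeff_mul_eq_zero hhbar hlc fun m _ => ?_)⟩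
    rw [hcancel, S.coeff_zero]

/-- Let `A` be a finite ring, `f ∈ R = A[X; θ, δ]` monic of degree `n`
with `f = h * g = g * ħ`, `deg g = n - k`, `deg ħ = k`, and the leading coefficient of
`ħ` invertible. Let `M` be the `n × n` matrix over `A` whose `i`-th row is the
coefficient vector of the remainder of `X^(i-1) * ħ` under right division by `f`.
Then the vector representation `C ⊆ Aⁿ` of `𝒞 = Rg/Rf` is the left kernel of `M`:
`C = { w ∈ Aⁿ : w ᵥ* M = 0 }`. -/
theorem code_eq_leftKernel
    {A R : Type*} [Ring A] [Nontrivial A] [Finite A] [Ring R]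
    (θ : A →+* A) (δ : A →+ A)
    (hδ : ∀ a b : A, δ (a * b) = δ a * b + θ a * δ b)
    (S : SkewPolyRing A θ δ R)
    (f g h hbar : R) (n k : ℕ) (hkn : k ≤ n)
    (hdegf : S.deg f = (n : WithBot ℕ)) (hmf : S.coeff f n = 1)
    (h1 : f = h * g) (h2 : f = g * hbar)
    (hdegg : S.deg g = ((n - k : ℕ) : WithBot ℕ))
    (hdeghbar : S.deg hbar = (k : WithBot ℕ))
    (hlc : IsUnit (S.coeff hbar k))
    (M : Matrix (Fin n) (Fin n) A)
    (hM : ∀ i : Fin n, ∃ q : R,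
      S.X ^ (i : ℕ) * hbar = q * f + ∑ j : Fin n, S.C (M i j) * S.X ^ (j : ℕ)) :
    ∀ w : Fin n → A,
      (∃ u : R, (∑ i : Fin n, S.C (w i) * S.X ^ (i : ℕ)) = u * g) ↔
        Matrix.vecMul w M = 0 :=
  code_eq_leftKernel_general θ δ S f g hbar n k hdegf hmf h2 hdeghbar hlc M hM
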